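/- Let G be a finite connected simple graph and Ω a potential maximal clique of G. If there is a vertex v ∈ Ω such that no connected component C of G \ Ω satisfies v ∈ N(C), then Ω = N[v]. -/

import Mathlib

open scoped Classical

namespace PaperECC

variable {V : Type*}

/-- `nbhd G X` is N(X): vertices outside `X` with a neighbor in `X`. -/
def nbhd (G : SimpleGraph V) (X : Set V) : Set V :=
  {v | v ∉ X ∧ ∃ u ∈ X, G.Adj u v}

/-- `closedNbhd G X` is N[X] = X ∪ N(X). -/
def closedNbhd (G : SimpleGraph V) (X : Set V) : Set V :=
  X ∪ nbhd G X

/-- closed neighborhood N[v] of a single vertex. -/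
def vNbhd (G : SimpleGraph V) (v : V) : Set V :=
  insert v (G.neighborSet v)

/-- `IsCompOf G X C`: `C` is the vertex set of a connected component of `G \ X`. -/
def IsCompOf (G : SimpleGraph V) (X C : Set V) : Prop :=
  C.Nonempty ∧ Disjoint C X ∧ (G.induce C).Connected ∧
    ∀ u ∈ C, ∀ v, v ∉ X → G.Adj u v → v ∈ C

/-- `C` is a full component of `X`: a component of `G \ X` with N(C) = X. -/
def IsFullCompOf (G : SimpleGraph V) (X C : Set V) : Prop :=
  IsCompOf G X C ∧ nbhd G C = X

/-- `S` is a minimal separator of `G`: it has at least two full components. -/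
def IsMinSep (G : SimpleGraph V) (S : Set V) : Prop :=
  ∃ C D : Set V, C ≠ D ∧ IsFullCompOf G S C ∧ IsFullCompOf G S D

/-- `C` is a block of `G`: a component of `G \ N(C)` whose neighborhood is a minimal separator. -/
def IsBlock (G : SimpleGraph V) (C : Set V) : Prop :=
  IsCompOf G (nbhd G C) C ∧ IsMinSep G (nbhd G C)

/-- `H` is chordal: every (injectively embedded) cycle on at least 4 vertices has a chord,
i.e. there is no induced cycle on four or more vertices. -/
def IsChordal (H : SimpleGraph V) : Prop :=
  ∀ n : ℕ, 4 ≤ n → ∀ f : ZMod n → V, Function.Injective f →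
    (∀ i, H.Adj (f i) (f (i + 1))) →
    ∃ i j : ZMod n, i ≠ j ∧ j ≠ i + 1 ∧ i ≠ j + 1 ∧ H.Adj (f i) (f j)

/-- `H` is a triangulation of `G` (on the same vertex set). -/
def IsTri (G H : SimpleGraph V) : Prop :=
  IsChordal H ∧ G ≤ H

/-- `H` is a minimal triangulation of `G`. -/
def IsMinTri (G H : SimpleGraph V) : Prop :=
  IsTri G H ∧ ∀ H' : SimpleGraph V, IsTri G H' → H' ≤ H → H' = H

/-- `Ω` is a maximal clique of `H`. -/
def IsMaxClique (H : SimpleGraph V) (Ω : Set V) : Prop :=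
  H.IsClique Ω ∧ ∀ Ω' : Set V, H.IsClique Ω' → Ω ⊆ Ω' → Ω' = Ω

/-- `Ω` is a potential maximal clique of `G`: a maximal clique of some minimal triangulation. -/
def IsPMC (G : SimpleGraph V) (Ω : Set V) : Prop :=
  ∃ H : SimpleGraph V, IsMinTri G H ∧ IsMaxClique H Ω

/-- `W` is an edge clique cover of `G`: a finite collection of cliques covering all edges. -/
def IsECC (G : SimpleGraph V) (W : Finset (Set V)) : Prop :=
  (∀ K ∈ W, G.IsClique K) ∧ ∀ u v : V, G.Adj u v → ∃ K ∈ W, u ∈ K ∧ v ∈ K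

/-- `W[X]`: the cliques of `W` intersecting the vertex set `X`. -/
noncomputable def meeting (W : Finset (Set V)) (X : Set V) : Finset (Set V) :=
  W.filter (fun K => (K ∩ X).Nonempty)

/-- `V(G, W')`: the vertices all of whose cliques (within `W`) belong to `W'`. -/
def partVerts (W W' : Finset (Set V)) : Set V :=
  {v | ∀ K ∈ W, v ∈ K → K ∈ W'}

/-- The connected components of the subgraph of `G` induced on a vertex set `Y`. -/
def compsOf (G : SimpleGraph V) (Y : Set V) : Set (Set V) :=
  {C | IsCompOf G Yᶜ C}

/-- `C(W')`: the components of the part `W'` of the edge clique cover `W`. -/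
def partComps (G : SimpleGraph V) (W W' : Finset (Set V)) : Set (Set V) :=
  compsOf G (partVerts W W')

/-- `W'` is a good part of `W`: a nonempty subset all of whose components are blocks of `G`. -/
def IsGoodPart (G : SimpleGraph V) (W W' : Finset (Set V)) : Prop :=
  W' ⊆ W ∧ W'.Nonempty ∧ ∀ C ∈ partComps G W W', IsBlock G C

/-- The realization `R(C)` of a block `C`, as a graph supported on `N[C]`:
edges of `G[N[C]]` together with all pairs inside `N(C)`. -/
def realization (G : SimpleGraph V) (C : Set V) : SimpleGraph V where
  Adj u v := u ≠ v ∧ u ∈ closedNbhd G C ∧ v ∈ closedNbhd G C ∧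
    (G.Adj u v ∨ (u ∈ nbhd G C ∧ v ∈ nbhd G C))
  symm := by
    constructor
    intro u v h
    exact ⟨h.1.symm, h.2.2.1, h.2.1, h.2.2.2.elim (fun a => Or.inl a.symm)
      (fun a => Or.inr ⟨a.2, a.1⟩)⟩
  loopless := ⟨fun u h => h.1 rfl⟩

/-- The complete graph on the vertex set `Ω` (supported on `Ω`): all pairs inside `Ω`. -/
def cliqueOn (Ω : Set V) : SimpleGraph V where
  Adj u v := u ≠ v ∧ u ∈ Ω ∧ v ∈ Ω
  symm := ⟨fun u v h => ⟨h.1.symm, h.2.2, h.2.1⟩⟩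
  loopless := ⟨fun u h => h.1 rfl⟩

/-- The induced subgraph `G[A]`, as a graph supported on `A`. -/
def inducedOn (G : SimpleGraph V) (A : Set V) : SimpleGraph V where
  Adj u v := G.Adj u v ∧ u ∈ A ∧ v ∈ A
  symm := ⟨fun u v h => ⟨h.1.symm, h.2.2, h.2.1⟩⟩
  loopless := ⟨fun u h => G.ne_of_adj h.1 rfl⟩

/-- All edges of `H` lie inside the vertex set `A` (i.e. `H` has vertex set `A`). -/
def edgesWithin (H : SimpleGraph V) (A : Set V) : Prop :=
  ∀ u v : V, H.Adj u v → u ∈ A ∧ v ∈ A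

/-- `H` is a triangulation of the graph `G'` with vertex set `A`. -/
def IsTriOn (G' : SimpleGraph V) (A : Set V) (H : SimpleGraph V) : Prop :=
  IsChordal H ∧ G' ≤ H ∧ edgesWithin H A

/-- `H` is a minimal triangulation of the graph `G'` with vertex set `A`. -/
def IsMinTriOn (G' : SimpleGraph V) (A : Set V) (H : SimpleGraph V) : Prop :=
  IsTriOn G' A H ∧ ∀ H' : SimpleGraph V, IsTriOn G' A H' → H' ≤ H → H' = H

/-- `M` is a module of `G`. -/
def IsModule (G : SimpleGraph V) (M : Set V) : Prop :=
  ∀ v ∉ M, (∀ u ∈ M, G.Adj v u) ∨ (∀ u ∈ M, ¬ G.Adj v u)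

/-! A neighbour of `v` outside `Ω` would put `v` into the neighbourhood of its component of
`G \ Ω`, so `N_G(v) ⊆ Ω` is a clique of the minimal triangulation `H`. Then deleting from `H`
the fill edges at `v` keeps it chordal, so by minimality there are none, and the `H`-clique
`Ω ∋ v` lies in `N_H[v] = N_G[v]`. -/

open SimpleGraph

section

variable {G H : SimpleGraph V}

theorem exists_isCompOf_mem {X : Set V} {x : V} (hx : x ∉ X) : ∃ C, IsCompOf G X C ∧ x ∈ C := by
  set S : Set (Set V) := {s | s ⊆ Xᶜ ∧ x ∈ s ∧ (G.induce s).Connected}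
  have hxS : {x} ∈ S := ⟨Set.singleton_subset_iff.2 hx, rfl, Connected.of_subsingleton⟩
  have hxC : x ∈ ⋃₀ S := ⟨{x}, hxS, rfl⟩
  refine ⟨⋃₀ S, ⟨⟨x, hxC⟩, ?_, ?_, ?_⟩, hxC⟩
  · exact Set.subset_compl_iff_disjoint_right.1 (Set.sUnion_subset fun s hs => hs.1)
  · exact induce_sUnion_connected_of_pairwise_not_disjoint ⟨{x}, hxS⟩
      (fun hs ht => ⟨x, hs.2.1, ht.2.1⟩) (fun hs => hs.2.2)
  · rintro u ⟨s, hs, hus⟩ y hy huy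
    refine ⟨s ∪ {u, y}, ⟨?_, Or.inl hs.2.1, ?_⟩, Or.inr (by simp)⟩
    · exact Set.union_subset hs.1 (Set.insert_subset (hs.1 hus) (Set.singleton_subset_iff.2 hy))
    · exact induce_union_connected hs.2.2.preconnected
        (induce_pair_connected_of_adj huy).preconnected ⟨u, hus, by simp⟩

theorem neighborSet_subset_of_forall_notMem_nbhd {X : Set V} {v : V} (hv : v ∈ X)
    (h : ∀ C, IsCompOf G X C → v ∉ nbhd G C) : G.neighborSet v ⊆ X := by
  intro y hvy
  by_contra hy
  obtain ⟨C, hC, hyC⟩ := exists_isCompOf_mem (G := G) hy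
  exact h C hC ⟨Set.disjoint_right.1 hC.2.1 hv, y, hyC, hvy.symm⟩

theorem natCast_ne_zero_of_lt {n k : ℕ} (hk : 0 < k) (hkn : k < n) : (k : ZMod n) ≠ 0 := by
  rw [Ne, ZMod.natCast_eq_zero_iff]
  exact fun hdvd => absurd (Nat.le_of_dvd hk hdvd) (by omega)

def pruneAt (G H : SimpleGraph V) (v : V) : SimpleGraph V where
  Adj x y := H.Adj x y ∧ (x = v ∨ y = v → G.Adj x y)
  symm := ⟨fun _ _ h => ⟨h.1.symm, fun hv => (h.2 hv.symm).symm⟩⟩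
  loopless := ⟨fun _ h => H.ne_of_adj h.1 rfl⟩

theorem pruneAt_le (v : V) : pruneAt G H v ≤ H := fun _ _ h => h.1

theorem le_pruneAt (hGH : G ≤ H) (v : V) : G ≤ pruneAt G H v := fun _ _ h => ⟨hGH h, fun _ => h⟩

theorem pruneAt_adj_of_ne {v x y : V} (hx : x ≠ v) (hy : y ≠ v) (hxy : H.Adj x y) :
    (pruneAt G H v).Adj x y :=
  ⟨hxy, fun h => (h.elim hx hy).elim⟩

/-- On a cycle through `v` the two cycle-neighbours of `v` lie in the `H`-clique `N_G(v)` and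
span a chord; a cycle avoiding `v` keeps its `H`-chord. -/
theorem IsChordal.pruneAt (hH : IsChordal H) {v : V} (hN : H.IsClique (G.neighborSet v)) :
    IsChordal (pruneAt G H v) := by
  intro n hn f hf hcyc
  by_cases hv : ∃ i, f i = v
  · obtain ⟨i, rfl⟩ := hv
    have h1 : (1 : ZMod n) ≠ 0 := by exact_mod_cast natCast_ne_zero_of_lt one_pos (by omega)
    have h2 : (2 : ZMod n) ≠ 0 := by exact_mod_cast natCast_ne_zero_of_lt two_pos (by omega)
    have h3 : (3 : ZMod n) ≠ 0 := by exact_mod_cast natCast_ne_zero_of_lt three_pos (by omega)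
    have hprev : G.Adj (f i) (f (i - 1)) := by
      have := hcyc (i - 1)
      rw [sub_add_cancel] at this
      exact (this.2 (Or.inr rfl)).symm
    have hnext : G.Adj (f i) (f (i + 1)) := (hcyc i).2 (Or.inl rfl)
    have hne : ∀ {j k : ZMod n}, j - k ≠ 0 → f j ≠ f k := fun hjk h => hjk (sub_eq_zero.2 (hf h))
    refine ⟨i - 1, i + 1, ?_, ?_, ?_, pruneAt_adj_of_ne ?_ ?_ (hN hprev hnext ?_)⟩
    · intro h; exact h2 (by linear_combination -h)
    · intro h; exact h1 (by linear_combination h)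
    · intro h; exact h3 (by linear_combination -h)
    · exact hne (by ring_nf; exact neg_ne_zero.2 h1)
    · exact hne (by ring_nf; exact h1)
    · exact hne (by ring_nf; exact neg_ne_zero.2 h2)
  · push Not at hv
    obtain ⟨i, j, hij, hji, hij', hadj⟩ := hH n hn f hf (fun i => (hcyc i).1)
    exact ⟨i, j, hij, hji, hij', pruneAt_adj_of_ne (hv i) (hv j) hadj⟩

theorem IsMinTri.neighborSet_eq (hH : IsMinTri G H) {v : V}
    (hN : H.IsClique (G.neighborSet v)) : H.neighborSet v = G.neighborSet v := by
  have hprune : pruneAt G H v = H :=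
    hH.2 _ ⟨hH.1.1.pruneAt hN, le_pruneAt hH.1.2 v⟩ (pruneAt_le v)
  ext x
  refine ⟨fun hx => ?_, fun hx => hH.1.2 hx⟩
  rw [← hprune] at hx
  exact hx.2 (Or.inl rfl)

end

theorem pmc_closed_nbhd_general {V : Type*} (G : SimpleGraph V)
    (Ω : Set V) (hΩ : IsPMC G Ω) (v : V) (hv : v ∈ Ω)
    (h : ∀ C : Set V, IsCompOf G Ω C → v ∉ nbhd G C) :
    Ω = vNbhd G v := by
  obtain ⟨H, hH, hΩH, -⟩ := hΩ
  have hNΩ : G.neighborSet v ⊆ Ω := neighborSet_subset_of_forall_notMem_nbhd hv h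
  have hHN : H.neighborSet v = G.neighborSet v := hH.neighborSet_eq (hΩH.subset hNΩ)
  refine subset_antisymm (fun x hx => ?_) (Set.insert_subset hv hNΩ)
  rcases eq_or_ne x v with rfl | hxv
  · exact Set.mem_insert x _
  · exact Set.mem_insert_of_mem v (hHN ▸ hΩH hv hx hxv.symm)

/-- If a PMC `Ω` of a connected graph `G` contains a vertex `v` such that
no component `C` of `G \ Ω` has `v ∈ N(C)`, then `Ω = N[v]`. -/
theorem pmc_closed_nbhd {V : Type*} [Fintype V] (G : SimpleGraph V) (hG : G.Connected)
    (Ω : Set V) (hΩ : IsPMC G Ω) (v : V) (hv : v ∈ Ω)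
    (h : ∀ C : Set V, IsCompOf G Ω C → v ∉ nbhd G C) :
    Ω = vNbhd G v :=
  pmc_closed_nbhd_general G Ω hΩ v hv h

end PaperECC
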